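/- (Corollary 1: optimal noise variance and acceptance rate.) The function g(σ) = σ⁴ Φ(−σ), σ > 0, where Φ is the standard normal cumulative distribution function, attains a maximum on (0,∞); every maximiser σ* satisfies the stationarity equation 4 Φ(−σ*) = σ* φ(σ*), where φ is the standard normal density; the maximiser is unique; and it satisfies 3.2825 ≤ σ*² ≤ 3.2835 (i.e. σ*² = 3.283 to three decimal places). Moreover the associated optimal asymptotic acceptance rate α_opt = 2 Φ(−σ*) satisfies 0.07000 ≤ α_opt ≤ 0.07002 (i.e. α_opt = 7.001% to three decimal places). -/

import Mathlib

open MeasureTheory ProbabilityTheory Real Finset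

noncomputable def stdNormalCDF (x : ℝ) : ℝ :=
  ∫ t in Set.Iic x, Real.exp (-t ^ 2 / 2) / Real.sqrt (2 * Real.pi)

noncomputable def stdNormalPDF (x : ℝ) : ℝ :=
  Real.exp (-x ^ 2 / 2) / Real.sqrt (2 * Real.pi)

lemma sqrt2pi_pos : 0 < Real.sqrt (2 * Real.pi) :=
  Real.sqrt_pos.2 (by positivity)

lemma sqrt2pi_lb : (2.506628013 : ℝ) ≤ Real.sqrt (2 * Real.pi) := by
  rw [show (2.506628013 : ℝ) = Real.sqrt (2.506628013 ^ 2) by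
    rw [Real.sqrt_sq]; norm_num]
  apply Real.sqrt_le_sqrt
  nlinarith [Real.pi_gt_d6]

lemma sqrt2pi_ub : Real.sqrt (2 * Real.pi) ≤ 2.506628413 := by
  rw [show (2.506628413 : ℝ) = Real.sqrt (2.506628413 ^ 2) by
    rw [Real.sqrt_sq]; norm_num]
  apply Real.sqrt_le_sqrt
  nlinarith [Real.pi_lt_d6]

lemma pdf_eq (x : ℝ) : stdNormalPDF x = Real.exp (-(1/2) * x ^ 2) / Real.sqrt (2 * Real.pi) := by
  unfold stdNormalPDF; ring_nf

lemma pdf_pos (x : ℝ) : 0 < stdNormalPDF x :=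
  div_pos (Real.exp_pos _) sqrt2pi_pos

lemma pdf_cont : Continuous stdNormalPDF := by
  unfold stdNormalPDF
  exact (Real.continuous_exp.comp (by continuity)).div_const _

lemma pdf_integrable : Integrable stdNormalPDF := by
  have h : Integrable (fun x : ℝ => Real.exp (-(1/2) * x ^ 2)) := by
    exact integrable_exp_neg_mul_sq (by norm_num)
  have := h.div_const (Real.sqrt (2 * Real.pi))
  convert this using 2 with x
  rw [pdf_eq]

lemma pdf_even (x : ℝ) : stdNormalPDF (-x) = stdNormalPDF x := by
  unfold stdNormalPDF; rw [neg_pow]; ring_nf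

lemma integral_pdf : ∫ x, stdNormalPDF x = 1 := by
  rw [show (fun x => stdNormalPDF x) = fun x => Real.exp (-(1/2) * x ^ 2) / Real.sqrt (2 * Real.pi) by
    funext x; exact pdf_eq x]
  rw [integral_div, integral_gaussian]
  rw [show Real.pi / (1/2) = 2 * Real.pi by ring]
  rw [div_self (ne_of_gt sqrt2pi_pos)]

lemma cdf_eq_integral (x : ℝ) : stdNormalCDF x = ∫ t in Set.Iic x, stdNormalPDF t := rfl

lemma cdf_add_cdf_neg (x : ℝ) : stdNormalCDF x + stdNormalCDF (-x) = 1 := by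
  have h1 : stdNormalCDF (-x) = ∫ t in Set.Ioi x, stdNormalPDF t := by
    rw [cdf_eq_integral, ← integral_comp_neg_Ioi]
    congr 1; funext t; exact pdf_even t
  rw [cdf_eq_integral, h1]
  have := integral_add_compl (measurableSet_Iic (a := x)) pdf_integrable
  rw [Set.compl_Iic] at this
  rw [this, integral_pdf]

lemma cdf_zero : stdNormalCDF 0 = 1/2 := by
  have := cdf_add_cdf_neg 0
  rw [neg_zero] at this; linarith

lemma cdf_nonneg (x : ℝ) : 0 ≤ stdNormalCDF x := by
  rw [cdf_eq_integral]
  exact setIntegral_nonneg measurableSet_Iic (fun t _ => (pdf_pos t).le)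

lemma cdf_le_one (x : ℝ) : stdNormalCDF x ≤ 1 := by
  have := cdf_add_cdf_neg x
  have := cdf_nonneg (-x)
  linarith

lemma cdf_sub (a b : ℝ) : stdNormalCDF b - stdNormalCDF a = ∫ t in a..b, stdNormalPDF t := by
  rw [cdf_eq_integral, cdf_eq_integral]
  exact intervalIntegral.integral_Iic_sub_Iic pdf_integrable.integrableOn pdf_integrable.integrableOn

lemma hasDerivAt_cdf (x : ℝ) : HasDerivAt stdNormalCDF (stdNormalPDF x) x := by
  have : stdNormalCDF = fun u => stdNormalCDF 0 + ∫ t in (0:ℝ)..u, stdNormalPDF t := by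
    funext u
    rw [← cdf_sub]; ring
  rw [this]
  have h := intervalIntegral.integral_hasDerivAt_right
    (pdf_integrable.intervalIntegrable (a := 0) (b := x))
    (pdf_cont.stronglyMeasurableAtFilter _ _) pdf_cont.continuousAt
  simpa using (h.const_add (stdNormalCDF 0))

lemma hasDerivAt_pdf (x : ℝ) : HasDerivAt stdNormalPDF (-x * stdNormalPDF x) x := by
  have h1 : HasDerivAt (fun t : ℝ => -t ^ 2 / 2) (-x) x := by
    have := ((hasDerivAt_pow 2 x).neg).div_const 2
    simpa using this.congr_deriv (by ring)
  have h2 := (h1.exp).div_const (Real.sqrt (2 * Real.pi))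
  have he : stdNormalPDF = fun t => Real.exp (-t ^ 2 / 2) / Real.sqrt (2 * Real.pi) := rfl
  rw [he]
  convert h2 using 1
  · rfl
  · rfl
  simp only [stdNormalPDF]; ring

/-- `g σ = σ^4 Φ(-σ)` -/
noncomputable def gfun (σ : ℝ) : ℝ := σ ^ 4 * stdNormalCDF (-σ)

lemma hasDerivAt_gfun (σ : ℝ) :
    HasDerivAt gfun (4 * σ ^ 3 * stdNormalCDF (-σ) - σ ^ 4 * stdNormalPDF σ) σ := by
  have h1 : HasDerivAt (fun s : ℝ => stdNormalCDF (-s)) (-stdNormalPDF σ) σ := by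
    have := (hasDerivAt_cdf (-σ)).comp σ (hasDerivAt_neg σ)
    simp [pdf_even] at this; exact this
  have h2 := (hasDerivAt_pow 4 σ).mul h1
  unfold gfun
  convert h2 using 1
  · rfl
  · rfl
  · rfl
  push_cast; ring

/-- `F σ = 4 Φ(-σ) - σ φ(σ)` -/
noncomputable def Ffun (σ : ℝ) : ℝ := 4 * stdNormalCDF (-σ) - σ * stdNormalPDF σ

lemma hasDerivAt_Ffun (σ : ℝ) :
    HasDerivAt Ffun ((σ ^ 2 - 5) * stdNormalPDF σ) σ := by
  have h1 : HasDerivAt (fun s : ℝ => stdNormalCDF (-s)) (-stdNormalPDF σ) σ := by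
    have := (hasDerivAt_cdf (-σ)).comp σ (hasDerivAt_neg σ)
    simp [pdf_even] at this; exact this
  have h2 := ((hasDerivAt_id σ).mul (hasDerivAt_pdf σ))
  have h3 := (h1.const_mul 4).sub h2
  unfold Ffun
  convert h3 using 1
  · rfl
  · rfl
  · rfl
  simp only [id_eq]; ring

lemma cdf_diff : Differentiable ℝ stdNormalCDF := fun x => (hasDerivAt_cdf x).differentiableAt

lemma cdf_cont : Continuous stdNormalCDF := cdf_diff.continuous

lemma Ffun_cont : Continuous Ffun :=
  (continuous_const.mul (cdf_cont.comp continuous_neg)).sub (continuous_id.mul pdf_cont)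

lemma pdf_tendsto_zero : Filter.Tendsto stdNormalPDF Filter.atTop (nhds 0) := by
  have h : Filter.Tendsto (fun t : ℝ => -t ^ 2 / 2) Filter.atTop Filter.atBot := by
    apply Filter.Tendsto.atBot_div_const (by norm_num)
    exact Filter.tendsto_neg_atBot_iff.2 (Filter.tendsto_pow_atTop (by norm_num : (2:ℕ) ≠ 0))
  have h2 := (Real.tendsto_exp_atBot.comp h).div_const (Real.sqrt (2 * Real.pi))
  rw [zero_div] at h2
  exact h2

lemma integrable_mul_pdf : Integrable (fun t => t * stdNormalPDF t) := by
  have h : Integrable (fun x : ℝ => x * Real.exp (-(1/2) * x ^ 2)) :=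
    integrable_mul_exp_neg_mul_sq (by norm_num)
  have := h.div_const (Real.sqrt (2 * Real.pi))
  convert this using 2 with x
  rw [pdf_eq]; ring

lemma integral_mul_pdf_Ioi (σ : ℝ) :
    ∫ t in Set.Ioi σ, t * stdNormalPDF t = stdNormalPDF σ := by
  have key := MeasureTheory.integral_Ioi_of_hasDerivAt_of_tendsto
    (f := fun t => -stdNormalPDF t) (f' := fun t => t * stdNormalPDF t) (a := σ) (m := 0)
    (pdf_cont.neg.continuousWithinAt)
    (fun x _ => by exact (hasDerivAt_pdf x).neg.congr_deriv (by ring))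
    integrable_mul_pdf.integrableOn
    (by simpa using pdf_tendsto_zero.neg)
  rw [key]; ring

lemma cdf_neg_eq_Ioi (σ : ℝ) : stdNormalCDF (-σ) = ∫ t in Set.Ioi σ, stdNormalPDF t := by
  rw [cdf_eq_integral, ← integral_comp_neg_Ioi]
  congr 1; funext t; exact pdf_even t

lemma cdf_neg_le (σ : ℝ) (hσ : 0 < σ) : stdNormalCDF (-σ) ≤ stdNormalPDF σ / σ := by
  rw [cdf_neg_eq_Ioi]
  have h2 : ∫ t in Set.Ioi σ, stdNormalPDF t ≤ ∫ t in Set.Ioi σ, (t/σ) * stdNormalPDF t := by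
    apply setIntegral_mono_on pdf_integrable.integrableOn
      ((integrable_mul_pdf.div_const σ).congr ?_ |>.integrableOn) measurableSet_Ioi
    · intro t ht
      have h1 : (1:ℝ) ≤ t/σ := (one_le_div hσ).2 (le_of_lt ht)
      nlinarith [pdf_pos t]
    · filter_upwards with t; ring
  calc ∫ t in Set.Ioi σ, stdNormalPDF t ≤ ∫ t in Set.Ioi σ, (t/σ) * stdNormalPDF t := h2
    _ = (∫ t in Set.Ioi σ, t * stdNormalPDF t) / σ := by
        rw [← integral_div]; congr 1; funext t; ring
    _ = stdNormalPDF σ / σ := by rw [integral_mul_pdf_Ioi]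

open Finset in

private lemma hasDerivAt_T (n : ℕ) (u : ℝ) :
    HasDerivAt (fun u : ℝ => ∑ k ∈ range (n+2), (-u)^k / (Nat.factorial k : ℝ))
      (-∑ k ∈ range (n+1), (-u)^k / (Nat.factorial k : ℝ)) u := by
  induction n with
  | zero =>
      have : HasDerivAt (fun u : ℝ => 1 + -u) (-1 : ℝ) u := by
        simpa using (hasDerivAt_neg u).const_add 1
      convert this using 1
      · funext v; simp [Finset.sum_range_succ]
      · simp
  | succ m ih =>
      have hlast : HasDerivAt (fun u : ℝ => (-u)^(m+2) / (Nat.factorial (m+2) : ℝ))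
          (-((-u)^(m+1) / (Nat.factorial (m+1) : ℝ))) u := by
        have h1 : HasDerivAt (fun u : ℝ => (-u)^(m+2)) ((m+2 : ℕ) * (-u)^(m+1) * (-1)) u :=
          (hasDerivAt_pow (m+2) (-u)).comp u (hasDerivAt_neg u)
        have := h1.div_const (Nat.factorial (m+2) : ℝ)
        convert this using 1
        · rfl
        · rfl
        rw [Nat.factorial_succ (m+1)]
        push_cast
        field_simp
        ring
      have := ih.add hlast
      convert this using 1
      · rfl
      · rfl
      · funext v; rw [Finset.sum_range_succ]; rfl
      · rw [Finset.sum_range_succ]; ring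

lemma exp_neg_enclosure (n : ℕ) :
    ∀ u : ℝ, 0 ≤ u →
      0 ≤ (-1:ℝ)^(n+1) * (Real.exp (-u) - ∑ k ∈ range (n+1), (-u)^k / (Nat.factorial k : ℝ)) := by
  induction n with
  | zero =>
      intro u hu
      simp only [pow_one, zero_add, Finset.sum_range_one]
      simp only [pow_zero, Nat.factorial_zero]
      have : Real.exp (-u) ≤ 1 := Real.exp_le_one_iff.2 (by linarith)
      nlinarith
  | succ m ih =>
      intro u hu
      set G : ℝ → ℝ := fun u =>
        (-1:ℝ)^(m+2) * (Real.exp (-u) - ∑ k ∈ range (m+2), (-u)^k / (Nat.factorial k : ℝ)) with hG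
      have hderiv : ∀ v : ℝ, HasDerivAt G
          ((-1:ℝ)^(m+1) * (Real.exp (-v) - ∑ k ∈ range (m+1), (-v)^k / (Nat.factorial k : ℝ))) v := by
        intro v
        have h1 : HasDerivAt (fun v : ℝ => Real.exp (-v)) (-Real.exp (-v)) v := by
          simpa using ((hasDerivAt_neg v).exp)
        have h2 := (h1.sub (hasDerivAt_T m v)).const_mul ((-1:ℝ)^(m+2))
        convert h2 using 1
        · rfl
        · rfl
        · rfl
        ring
      have hmono : MonotoneOn G (Set.Ici (0:ℝ)) := by
        apply monotoneOn_of_deriv_nonneg (convex_Ici 0)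
          (fun v _ => (hderiv v).continuousAt.continuousWithinAt)
          (fun v _ => (hderiv v).differentiableAt.differentiableWithinAt)
        intro v hv
        rw [(hderiv v).deriv]
        exact ih v (le_of_lt (by simpa using hv))
      have h0 : G 0 = 0 := by
        simp only [hG, neg_zero, Real.exp_zero]
        have hsum : (∑ x ∈ range (m+2), (0:ℝ)^x / (Nat.factorial x : ℝ)) = 1 := by
          rw [Finset.sum_eq_single 0]
          · simp
          · intro b _ hb; simp [zero_pow hb]
          · simp
        rw [hsum]; ring
      have := hmono (Set.self_mem_Ici) hu hu
      rw [h0] at this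
      exact this

lemma exp_neg_lb (u : ℝ) (hu : 0 ≤ u) :
    ∑ k ∈ range 14, (-u)^k / (Nat.factorial k : ℝ) ≤ Real.exp (-u) := by
  have := exp_neg_enclosure 13 u hu
  norm_num at this
  linarith

lemma exp_neg_ub (u : ℝ) (hu : 0 ≤ u) :
    Real.exp (-u) ≤ ∑ k ∈ range 15, (-u)^k / (Nat.factorial k : ℝ) := by
  have := exp_neg_enclosure 14 u hu
  norm_num at this
  linarith

lemma term_eq (t : ℝ) (k : ℕ) :
    (-(t^2/2))^k / (Nat.factorial k : ℝ) = ((-1/2:ℝ))^k / (Nat.factorial k : ℝ) * t^(2*k) := by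
  rw [show (-(t^2/2)) = (-1/2) * t^2 by ring, mul_pow, pow_mul]
  ring

lemma poly_intble (N : ℕ) (a b : ℝ) :
    IntervalIntegrable (fun t : ℝ => ∑ k ∈ range N, ((-1/2:ℝ))^k / (Nat.factorial k : ℝ) * t^(2*k))
      volume a b := by
  apply Continuous.intervalIntegrable
  continuity

lemma exp_sq_intble (a b : ℝ) :
    IntervalIntegrable (fun t : ℝ => Real.exp (-t^2/2)) volume a b := by
  apply Continuous.intervalIntegrable
  continuity

lemma integral_T (N : ℕ) (a : ℝ) :
    ∫ t in (0:ℝ)..a, (∑ k ∈ range N, ((-1/2:ℝ))^k / (Nat.factorial k : ℝ) * t^(2*k))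
      = ∑ k ∈ range N, ((-1/2:ℝ))^k / (Nat.factorial k : ℝ) * a^(2*k+1)/(2*k+1) := by
  rw [intervalIntegral.integral_finset_sum (fun i _ => by
    apply Continuous.intervalIntegrable; continuity)]
  congr 1
  funext k
  rw [intervalIntegral.integral_const_mul, integral_pow]
  norm_num [Nat.factorial]
  ring

lemma J_lb (a : ℝ) (ha : 0 ≤ a) :
    ∑ k ∈ range 14, ((-1/2:ℝ))^k / (Nat.factorial k : ℝ) * a^(2*k+1)/(2*k+1)
      ≤ ∫ t in (0:ℝ)..a, Real.exp (-t^2/2) := by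
  rw [← integral_T]
  apply intervalIntegral.integral_mono_on ha (poly_intble 14 0 a) (exp_sq_intble 0 a)
  intro t _
  calc ∑ k ∈ range 14, ((-1/2:ℝ))^k / (Nat.factorial k : ℝ) * t^(2*k)
      = ∑ k ∈ range 14, (-(t^2/2))^k / (Nat.factorial k : ℝ) := by
        congr 1; funext k; rw [term_eq]
    _ ≤ Real.exp (-(t^2/2)) := exp_neg_lb _ (by positivity)
    _ = Real.exp (-t^2/2) := by ring_nf

lemma J_ub (a : ℝ) (ha : 0 ≤ a) :
    (∫ t in (0:ℝ)..a, Real.exp (-t^2/2))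
      ≤ ∑ k ∈ range 15, ((-1/2:ℝ))^k / (Nat.factorial k : ℝ) * a^(2*k+1)/(2*k+1) := by
  rw [← integral_T]
  apply intervalIntegral.integral_mono_on ha (exp_sq_intble 0 a) (poly_intble 15 0 a)
  intro t _
  calc Real.exp (-t^2/2) = Real.exp (-(t^2/2)) := by ring_nf
    _ ≤ ∑ k ∈ range 15, (-(t^2/2))^k / (Nat.factorial k : ℝ) := exp_neg_ub _ (by positivity)
    _ = ∑ k ∈ range 15, ((-1/2:ℝ))^k / (Nat.factorial k : ℝ) * t^(2*k) := by
        congr 1; funext k; rw [term_eq]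

-- numeric evaluations
lemma J1_lb : (1.165560708 : ℝ) ≤ ∫ t in (0:ℝ)..1.8118, Real.exp (-t^2/2) := by
  refine le_trans ?_ (J_lb 1.8118 (by norm_num))
  simp only [Finset.sum_range_succ, Finset.sum_range_zero]
  norm_num [Nat.factorial]

lemma J1_ub : (∫ t in (0:ℝ)..1.8118, Real.exp (-t^2/2)) ≤ 1.16556071 := by
  refine le_trans (J_ub 1.8118 (by norm_num)) ?_
  simp only [Finset.sum_range_succ, Finset.sum_range_zero]
  norm_num [Nat.factorial]

lemma J2_lb : (1.165580079 : ℝ) ≤ ∫ t in (0:ℝ)..1.8119, Real.exp (-t^2/2) := by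
  refine le_trans ?_ (J_lb 1.8119 (by norm_num))
  simp only [Finset.sum_range_succ, Finset.sum_range_zero]
  norm_num [Nat.factorial]

lemma J2_ub : (∫ t in (0:ℝ)..1.8119, Real.exp (-t^2/2)) ≤ 1.165580081 := by
  refine le_trans (J_ub 1.8119 (by norm_num)) ?_
  simp only [Finset.sum_range_succ, Finset.sum_range_zero]
  norm_num [Nat.factorial]

lemma e1_lb : (0.193726157:ℝ) ≤ Real.exp (-(1.8118:ℝ)^2/2) := by
  have h := exp_neg_lb ((1.8118:ℝ)^2/2) (by norm_num)
  rw [show -((1.8118:ℝ)^2/2) = -(1.8118:ℝ)^2/2 by ring] at h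
  refine le_trans ?_ h
  simp only [Finset.sum_range_succ, Finset.sum_range_zero]
  norm_num [Nat.factorial]

lemma e1_ub : Real.exp (-(1.8118:ℝ)^2/2) ≤ 0.19372617 := by
  have h := exp_neg_ub ((1.8118:ℝ)^2/2) (by norm_num)
  rw [show -((1.8118:ℝ)^2/2) = -(1.8118:ℝ)^2/2 by ring] at h
  refine le_trans h ?_
  simp only [Finset.sum_range_succ, Finset.sum_range_zero]
  norm_num [Nat.factorial]

lemma e2_lb : (0.19369106:ℝ) ≤ Real.exp (-(1.8119:ℝ)^2/2) := by
  have h := exp_neg_lb ((1.8119:ℝ)^2/2) (by norm_num)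
  rw [show -((1.8119:ℝ)^2/2) = -(1.8119:ℝ)^2/2 by ring] at h
  refine le_trans ?_ h
  simp only [Finset.sum_range_succ, Finset.sum_range_zero]
  norm_num [Nat.factorial]

lemma e2_ub : Real.exp (-(1.8119:ℝ)^2/2) ≤ 0.193691073 := by
  have h := exp_neg_ub ((1.8119:ℝ)^2/2) (by norm_num)
  rw [show -((1.8119:ℝ)^2/2) = -(1.8119:ℝ)^2/2 by ring] at h
  refine le_trans h ?_
  simp only [Finset.sum_range_succ, Finset.sum_range_zero]
  norm_num [Nat.factorial]

-- CDF formula via interval integral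
lemma cdf_neg_formula (a : ℝ) :
    stdNormalCDF (-a) = 1/2 - (∫ t in (0:ℝ)..a, Real.exp (-t^2/2)) / Real.sqrt (2*Real.pi) := by
  have h1 := cdf_add_cdf_neg a
  have h2 := cdf_sub 0 a
  rw [cdf_zero] at h2
  have h3 : ∫ t in (0:ℝ)..a, stdNormalPDF t
      = (∫ t in (0:ℝ)..a, Real.exp (-t^2/2)) / Real.sqrt (2*Real.pi) := by
    rw [← intervalIntegral.integral_div]
    rfl
  rw [h3] at h2
  linarith

lemma Phi1_lb : (0.0350085 : ℝ) ≤ stdNormalCDF (-(1.8118:ℝ)) := by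
  rw [cdf_neg_formula]
  have hJ := J1_ub
  have hs := sqrt2pi_lb
  have h : (∫ t in (0:ℝ)..1.8118, Real.exp (-t^2/2)) / Real.sqrt (2*Real.pi)
      ≤ 1.16556071 / 2.506628013 :=
    div_le_div₀ (by norm_num) hJ (by norm_num) hs
  nlinarith

lemma Phi1_ub : stdNormalCDF (-(1.8118:ℝ)) ≤ 0.03500858 := by
  rw [cdf_neg_formula]
  have hJ := J1_lb
  have hs := sqrt2pi_ub
  have h : (1.165560708:ℝ) / 2.506628413
      ≤ (∫ t in (0:ℝ)..1.8118, Real.exp (-t^2/2)) / Real.sqrt (2*Real.pi) :=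
    div_le_div₀ (by linarith) hJ sqrt2pi_pos hs
  nlinarith

lemma Phi2_lb : (0.03500077 : ℝ) ≤ stdNormalCDF (-(1.8119:ℝ)) := by
  rw [cdf_neg_formula]
  have hJ := J2_ub
  have hs := sqrt2pi_lb
  have h : (∫ t in (0:ℝ)..1.8119, Real.exp (-t^2/2)) / Real.sqrt (2*Real.pi)
      ≤ 1.165580081 / 2.506628013 :=
    div_le_div₀ (by norm_num) hJ (by norm_num) hs
  nlinarith

lemma Phi2_ub : stdNormalCDF (-(1.8119:ℝ)) ≤ 0.03500086 := by
  rw [cdf_neg_formula]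
  have hJ := J2_lb
  have hs := sqrt2pi_ub
  have h : (1.165580079:ℝ) / 2.506628413
      ≤ (∫ t in (0:ℝ)..1.8119, Real.exp (-t^2/2)) / Real.sqrt (2*Real.pi) :=
    div_le_div₀ (by linarith) hJ sqrt2pi_pos hs
  nlinarith

lemma pdf1_ub : stdNormalPDF (1.8118:ℝ) ≤ 0.07728557 := by
  unfold stdNormalPDF
  have he := e1_ub
  have hs := sqrt2pi_lb
  have h : Real.exp (-(1.8118:ℝ)^2/2) / Real.sqrt (2*Real.pi) ≤ 0.19372617 / 2.506628013 :=
    div_le_div₀ (by norm_num) he (by norm_num) hs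
  nlinarith

lemma pdf2_lb : (0.07727154:ℝ) ≤ stdNormalPDF (1.8119:ℝ) := by
  unfold stdNormalPDF
  have he := e2_lb
  have hs := sqrt2pi_ub
  have h : (0.19369106:ℝ) / 2.506628413 ≤ Real.exp (-(1.8119:ℝ)^2/2) / Real.sqrt (2*Real.pi) :=
    div_le_div₀ (le_trans (by norm_num) he) he sqrt2pi_pos hs
  nlinarith

lemma F_a1_pos : 0 < Ffun 1.8118 := by
  unfold Ffun
  have := Phi1_lb
  have := pdf1_ub
  have := pdf_pos (1.8118:ℝ)
  nlinarith

lemma F_a2_neg : Ffun 1.8119 < 0 := by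
  unfold Ffun
  have := Phi2_ub
  have := pdf2_lb
  nlinarith

lemma F_strictAntiOn : StrictAntiOn Ffun (Set.Icc 0 (Real.sqrt 5)) := by
  apply strictAntiOn_of_deriv_neg (convex_Icc _ _) Ffun_cont.continuousOn
  intro x hx
  rw [interior_Icc] at hx
  rw [(hasDerivAt_Ffun x).deriv]
  have hx2 : x^2 < 5 := by
    have := hx.2
    have h0 : (0:ℝ) ≤ x := le_of_lt hx.1
    nlinarith [Real.sq_sqrt (by norm_num : (0:ℝ) ≤ 5), Real.sqrt_nonneg 5]
  nlinarith [pdf_pos x]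

lemma F_strictMonoOn : StrictMonoOn Ffun (Set.Ici (Real.sqrt 5)) := by
  apply strictMonoOn_of_deriv_pos (convex_Ici _) Ffun_cont.continuousOn
  intro x hx
  rw [interior_Ici] at hx
  rw [(hasDerivAt_Ffun x).deriv]
  have hx2 : 5 < x^2 := by
    have h0 : (0:ℝ) ≤ Real.sqrt 5 := Real.sqrt_nonneg 5
    have hx' : Real.sqrt 5 < x := hx
    nlinarith [Real.sq_sqrt (by norm_num : (0:ℝ) ≤ 5)]
  nlinarith [pdf_pos x]

lemma mul_pdf_tendsto_zero :
    Filter.Tendsto (fun σ => σ * stdNormalPDF σ) Filter.atTop (nhds 0) := by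
  have hb : Filter.Tendsto (fun σ : ℝ => (8 / Real.sqrt (2*Real.pi)) / σ^3)
      Filter.atTop (nhds 0) :=
    Filter.Tendsto.div_atTop tendsto_const_nhds (Filter.tendsto_pow_atTop (by norm_num))
  apply tendsto_of_tendsto_of_tendsto_of_le_of_le' tendsto_const_nhds hb
  · filter_upwards [Filter.eventually_ge_atTop (0:ℝ)] with σ hσ
    exact mul_nonneg hσ (pdf_pos σ).le
  · filter_upwards [Filter.eventually_ge_atTop (1:ℝ)] with σ hσ
    have hσ0 : (0:ℝ) < σ := by linarith
    have hE : (0:ℝ) < Real.exp (σ^2/2) := Real.exp_pos _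
    have hexp : σ^4/8 ≤ Real.exp (σ^2/2) := by
      nlinarith [Real.quadratic_le_exp_of_nonneg (by positivity : (0:ℝ) ≤ σ^2/2)]
    have hkey : σ * Real.exp (-σ^2/2) ≤ 8/σ^3 := by
      rw [show -σ^2/2 = -(σ^2/2) by ring, Real.exp_neg, le_div_iff₀ (pow_pos hσ0 3),
        show σ * (Real.exp (σ^2/2))⁻¹ * σ^3 = σ^4 / Real.exp (σ^2/2) by
          field_simp]
      rw [div_le_iff₀ hE]; nlinarith
    have : σ * stdNormalPDF σ = (σ * Real.exp (-σ^2/2)) / Real.sqrt (2*Real.pi) := by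
      unfold stdNormalPDF; ring
    rw [this]
    calc σ * Real.exp (-σ^2/2) / Real.sqrt (2*Real.pi)
        ≤ (8/σ^3) / Real.sqrt (2*Real.pi) := by
          exact (div_le_div_iff_of_pos_right sqrt2pi_pos).2 hkey
      _ = 8 / Real.sqrt (2*Real.pi) / σ^3 := by ring

lemma cdf_neg_tendsto_zero :
    Filter.Tendsto (fun σ => stdNormalCDF (-σ)) Filter.atTop (nhds 0) := by
  apply tendsto_of_tendsto_of_tendsto_of_le_of_le' tendsto_const_nhds pdf_tendsto_zero
  · filter_upwards with σ
    exact cdf_nonneg _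
  · filter_upwards [Filter.eventually_ge_atTop (1:ℝ)] with σ hσ
    have h1 := cdf_neg_le σ (by linarith)
    have h2 : stdNormalPDF σ / σ ≤ stdNormalPDF σ := by
      rw [div_le_iff₀ (by linarith)]
      nlinarith [pdf_pos σ]
    linarith

lemma F_tendsto_zero : Filter.Tendsto Ffun Filter.atTop (nhds 0) := by
  have h := ((cdf_neg_tendsto_zero.const_mul 4).sub mul_pdf_tendsto_zero)
  simp at h; exact h

lemma F_neg_on_Ici (σ : ℝ) (hσ : Real.sqrt 5 ≤ σ) : Ffun σ < 0 := by
  have h1 : Ffun σ < Ffun (σ + 1) :=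
    F_strictMonoOn (Set.mem_Ici.2 hσ) (Set.mem_Ici.2 (by linarith)) (by linarith)
  have h2 : Ffun (σ + 1) ≤ 0 := by
    apply ge_of_tendsto F_tendsto_zero
    filter_upwards [Filter.eventually_ge_atTop (σ + 1)] with x hx
    rcases eq_or_lt_of_le hx with h | h
    · rw [h]
    · exact (F_strictMonoOn (Set.mem_Ici.2 (by linarith)) (Set.mem_Ici.2 (by linarith)) h).le
  linarith

lemma sqrt5_bounds : (2:ℝ) ≤ Real.sqrt 5 ∧ Real.sqrt 5 ≤ 2.24 := by
  constructor
  · rw [show (2:ℝ) = Real.sqrt 4 by rw [show (4:ℝ) = 2^2 by norm_num, Real.sqrt_sq]; norm_num]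
    exact Real.sqrt_le_sqrt (by norm_num)
  · rw [show (2.24:ℝ) = Real.sqrt (2.24^2) by rw [Real.sqrt_sq] <;> norm_num]
    exact Real.sqrt_le_sqrt (by norm_num)

/-- zeros of F with σ > 0 are pinned between 1.8118 and 1.8119 -/
lemma F_zero_loc (σ : ℝ) (hσ : 0 < σ) (hF : Ffun σ = 0) : 1.8118 < σ ∧ σ < 1.8119 := by
  have hs5 := sqrt5_bounds
  have hlt : σ < Real.sqrt 5 := by
    by_contra h
    push_neg at h
    exact absurd hF (ne_of_lt (F_neg_on_Ici σ h))
  have hmem : σ ∈ Set.Icc (0:ℝ) (Real.sqrt 5) := ⟨hσ.le, hlt.le⟩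
  have hmem1 : (1.8118:ℝ) ∈ Set.Icc (0:ℝ) (Real.sqrt 5) := ⟨by norm_num, by linarith⟩
  have hmem2 : (1.8119:ℝ) ∈ Set.Icc (0:ℝ) (Real.sqrt 5) := ⟨by norm_num, by linarith⟩
  constructor
  · by_contra h
    push_neg at h
    rcases eq_or_lt_of_le h with h' | h'
    · rw [h'] at hF
      exact absurd hF (ne_of_gt F_a1_pos)
    · have := F_strictAntiOn hmem hmem1 h'
      have := F_a1_pos
      linarith
  · by_contra h
    push_neg at h
    rcases eq_or_lt_of_le h with h' | h'
    · rw [← h'] at hF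
      exact absurd hF (ne_of_lt F_a2_neg)
    · have := F_strictAntiOn hmem2 hmem h'
      have := F_a2_neg
      linarith

lemma F_zero_unique (σ τ : ℝ) (hσ : 0 < σ) (hτ : 0 < τ)
    (hFσ : Ffun σ = 0) (hFτ : Ffun τ = 0) : σ = τ := by
  have hs5 := sqrt5_bounds
  have h1 := F_zero_loc σ hσ hFσ
  have h2 := F_zero_loc τ hτ hFτ
  apply F_strictAntiOn.injOn ⟨by linarith [h1.1], by linarith [h1.2]⟩
    ⟨by linarith [h2.1], by linarith [h2.2]⟩
  rw [hFσ, hFτ]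

lemma gfun_cont : Continuous gfun :=
  (continuous_pow 4).mul (cdf_cont.comp continuous_neg)

lemma stationary (σ : ℝ) (hσ : 0 < σ)
    (hmax : ∀ σ' > (0:ℝ), gfun σ' ≤ gfun σ) : Ffun σ = 0 := by
  have hloc : IsLocalMax gfun σ := by
    filter_upwards [isOpen_Ioi.mem_nhds (Set.mem_Ioi.2 hσ)] with x hx
    exact hmax x hx
  have hd := hloc.deriv_eq_zero
  rw [(hasDerivAt_gfun σ).deriv] at hd
  have hσ3 : σ^3 ≠ 0 := pow_ne_zero 3 hσ.ne'
  have : σ^3 * Ffun σ = 0 := by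
    unfold Ffun
    nlinarith [hd]
  exact (mul_eq_zero.1 this).resolve_left hσ3

lemma g_lower : (0.3:ℝ) ≤ gfun 1.8118 := by
  unfold gfun
  nlinarith [Phi1_lb]

lemma g_small_left (σ : ℝ) (h0 : 0 < σ) (h : σ ≤ 1/2) : gfun σ ≤ 0.3 := by
  unfold gfun
  have h1 : stdNormalCDF (-σ) ≤ 1 := cdf_le_one _
  have h2 : stdNormalCDF (-σ) ≥ 0 := cdf_nonneg _
  have h3 : σ^4 ≤ (1/2:ℝ)^4 := pow_le_pow_left₀ h0.le h 4
  nlinarith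

lemma g_small_right (σ : ℝ) (h : 5 ≤ σ) : gfun σ ≤ 0.3 := by
  have h0 : (0:ℝ) < σ := by linarith
  have hE : (0:ℝ) < Real.exp (σ^2/2) := Real.exp_pos _
  have h1 : gfun σ ≤ σ^3 * stdNormalPDF σ := by
    unfold gfun
    calc σ^4 * stdNormalCDF (-σ) ≤ σ^4 * (stdNormalPDF σ / σ) :=
          mul_le_mul_of_nonneg_left (cdf_neg_le σ h0) (by positivity)
      _ = σ^3 * stdNormalPDF σ := by field_simp
  have hexp : σ^8/384 ≤ Real.exp (σ^2/2) := by
    have h5 := Real.sum_le_exp_of_nonneg (by positivity : (0:ℝ) ≤ σ^2/2) 5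
    simp only [Finset.sum_range_succ, Finset.sum_range_zero] at h5
    norm_num [Nat.factorial] at h5
    nlinarith [pow_nonneg h0.le 2, pow_nonneg h0.le 4, pow_nonneg h0.le 6]
  have hkey : σ^3 * (Real.exp (σ^2/2))⁻¹ ≤ 384/σ^5 := by
    rw [le_div_iff₀ (by positivity),
      show σ^3 * (Real.exp (σ^2/2))⁻¹ * σ^5 = σ^8 / Real.exp (σ^2/2) by field_simp,
      div_le_iff₀ hE]
    nlinarith
  have h2 : σ^3 * stdNormalPDF σ ≤ 0.3 := by
    unfold stdNormalPDF
    rw [show -σ^2/2 = -(σ^2/2) by ring, Real.exp_neg]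
    have hc := sqrt2pi_lb
    have hσ5 : (3125:ℝ) ≤ σ^5 := by
      calc (3125:ℝ) = 5^5 := by norm_num
        _ ≤ σ^5 := pow_le_pow_left₀ (by norm_num) h 5
    calc σ^3 * ((Real.exp (σ^2/2))⁻¹ / Real.sqrt (2*Real.pi))
        = (σ^3 * (Real.exp (σ^2/2))⁻¹) / Real.sqrt (2*Real.pi) := by ring
      _ ≤ (384/σ^5) / Real.sqrt (2*Real.pi) := (div_le_div_iff_of_pos_right sqrt2pi_pos).2 hkey
      _ ≤ (384/3125) / 2.506628013 := by
          apply div_le_div₀ (by norm_num) ?_ (by norm_num) hc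
          apply div_le_div_of_nonneg_left (by norm_num) (by norm_num) hσ5
      _ ≤ 0.3 := by norm_num
  linarith

lemma exists_max : ∃ σs ∈ Set.Icc (0.5:ℝ) 5, ∀ σ > (0:ℝ), gfun σ ≤ gfun σs := by
  obtain ⟨σs, hmem, hmax⟩ := (isCompact_Icc (a := (0.5:ℝ)) (b := 5)).exists_isMaxOn
    (Set.nonempty_Icc.2 (by norm_num)) gfun_cont.continuousOn
  rw [isMaxOn_iff] at hmax
  refine ⟨σs, hmem, ?_⟩
  intro σ hσ
  have hgs : (0.3:ℝ) ≤ gfun σs :=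
    le_trans g_lower (hmax 1.8118 ⟨by norm_num, by norm_num⟩)
  by_cases h1 : σ ∈ Set.Icc (0.5:ℝ) 5
  · exact hmax σ h1
  · simp only [Set.mem_Icc, not_and_or, not_le] at h1
    rcases h1 with h | h
    · linarith [g_small_left σ hσ (by linarith : σ ≤ 1/2)]
    · linarith [g_small_right σ h.le]

/-- Corollary 1: the function `g(σ) = σ⁴ Φ(−σ)` attains a maximum on
`(0,∞)`; every maximiser satisfies `4Φ(−σ) = σ φ(σ)`; the maximiser `σ*` is unique
and satisfies `3.2825 ≤ σ*² ≤ 3.2835`, and the optimal acceptance rate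
`α_opt = 2Φ(−σ*)` satisfies `0.07000 ≤ α_opt ≤ 0.07002`. -/
theorem stmt12 :
    ∃ σs : ℝ, 0 < σs ∧
      (∀ σ > (0 : ℝ), σ ^ 4 * stdNormalCDF (-σ) ≤ σs ^ 4 * stdNormalCDF (-σs)) ∧
      (∀ σ > (0 : ℝ),
        (∀ σ' > (0 : ℝ), σ' ^ 4 * stdNormalCDF (-σ') ≤ σ ^ 4 * stdNormalCDF (-σ)) →
          4 * stdNormalCDF (-σ) = σ * stdNormalPDF σ) ∧
      (∀ σ > (0 : ℝ),
        (∀ σ' > (0 : ℝ), σ' ^ 4 * stdNormalCDF (-σ') ≤ σ ^ 4 * stdNormalCDF (-σ)) →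
          σ = σs) ∧
      4 * stdNormalCDF (-σs) = σs * stdNormalPDF σs ∧
      3.2825 ≤ σs ^ 2 ∧ σs ^ 2 ≤ 3.2835 ∧
      0.07000 ≤ 2 * stdNormalCDF (-σs) ∧ 2 * stdNormalCDF (-σs) ≤ 0.07002 := by
  obtain ⟨σs, hmem, hmax⟩ := exists_max
  rw [Set.mem_Icc] at hmem
  have hσs : 0 < σs := lt_of_lt_of_le (by norm_num) hmem.1
  have hFσs : Ffun σs = 0 := stationary σs hσs hmax
  have hloc := F_zero_loc σs hσs hFσs
  have hmono : StrictMono stdNormalCDF := strictMono_of_deriv_pos fun x => by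
    rw [(hasDerivAt_cdf x).deriv]; exact pdf_pos x
  refine ⟨σs, hσs, hmax, ?_, ?_, ?_, ?_, ?_, ?_, ?_⟩
  · intro σ hσ hm
    have h := stationary σ hσ hm
    unfold Ffun at h
    linarith
  · intro σ hσ hm
    exact F_zero_unique σ σs hσ hσs (stationary σ hσ hm) hFσs
  · unfold Ffun at hFσs
    linarith
  · nlinarith [hloc.1, hσs]
  · nlinarith [hloc.2, hσs]
  · have h1 := hmono (show -(1.8119:ℝ) < -σs by linarith [hloc.2])
    have h2 := Phi2_lb
    linarith
  · have h1 := hmono (show -σs < -(1.8118:ℝ) by linarith [hloc.1])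
    have h2 := Phi1_ub
    linarith
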